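/- There is an absolute constant c such that for all integers 0 ≤ k < l, every x ∈ I_{l+1}(e_k + e_l), and every A ∈ ℕ with A ≤ l, the Fejér kernel satisfies |K_{2^A}(x)| ≤ c·2^k; moreover K_{2^A}(x) = 0 whenever A > l. -/

import Mathlib

open MeasureTheory Filter Finset
open scoped ENNReal NNReal

noncomputable section

/-- The dyadic group `G = ∏ Z₂`. -/
abbrev G : Type := ℕ → ZMod 2

instance : TopologicalSpace (ZMod 2) := ⊥
instance : DiscreteTopology (ZMod 2) := ⟨rfl⟩
instance : MeasurableSpace (ZMod 2) := ⊤
instance : BorelSpace (ZMod 2) := ⟨borel_eq_top_of_discrete.symm⟩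
instance : ContinuousAdd (ZMod 2) := ⟨continuous_of_discreteTopology⟩
instance : ContinuousNeg (ZMod 2) := ⟨continuous_of_discreteTopology⟩
instance : IsTopologicalAddGroup (ZMod 2) := ⟨⟩

/-- The normalized Haar measure `μ` on the dyadic group `G`. -/
def μG : Measure G := Measure.addHaarMeasure ⊤

/-- The Rademacher functions `r_k(x) = (-1)^{x_k}`. -/
def rad (k : ℕ) (x : G) : ℝ := (-1 : ℝ) ^ (x k).val

/-- The Walsh functions `w_n = ∏_k r_k^{n_k}`, where `n = ∑ n_k 2^k`. -/
def walsh (n : ℕ) (x : G) : ℝ := ∏ k ∈ Finset.range n, rad k x ^ (Nat.testBit n k).toNat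

/-- The Dirichlet kernels `D_n = ∑_{k=0}^{n-1} w_k`. -/
def dirichlet (n : ℕ) (x : G) : ℝ := ∑ k ∈ Finset.range n, walsh k x

/-- The Fejér kernels `K_n = (1/n) ∑_{k=1}^{n} D_k`. -/
def fejer (n : ℕ) (x : G) : ℝ := (n : ℝ)⁻¹ * ∑ k ∈ Finset.Icc 1 n, dirichlet k x

/-- The Cesàro numbers `A_n^α = ((α+1)⋯(α+n))/n!`. -/
def cesA (α : ℝ) (n : ℕ) : ℝ := (∏ i ∈ Finset.range n, (α + i + 1)) / n.factorial

/-- The `(C,α)` kernels `K_n^α = (1/A_n^α) ∑_{k=1}^n A_{n-k}^{α-1} D_k`. -/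
def cesKernel (α : ℝ) (n : ℕ) (x : G) : ℝ :=
  (cesA α n)⁻¹ * ∑ k ∈ Finset.Icc 1 n, cesA (α - 1) (n - k) * dirichlet k x

/-- Walsh–Fourier coefficients of an integrable function. -/
def walshCoeff (f : G → ℝ) (k : ℕ) : ℝ := ∫ x, f x * walsh k x ∂μG

/-- Partial sums `S_m f` of the Walsh–Fourier series. -/
def partialSum (f : G → ℝ) (m : ℕ) (x : G) : ℝ :=
  ∑ k ∈ Finset.range m, walshCoeff f k * walsh k x

/-- The `(C,α)` means `σ_n^α f = (1/A_n^α) ∑_{k=1}^n A_{n-k}^{α-1} S_k f`. -/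
def cesaroMean (α : ℝ) (f : G → ℝ) (n : ℕ) (x : G) : ℝ :=
  (cesA α n)⁻¹ * ∑ k ∈ Finset.Icc 1 n, cesA (α - 1) (n - k) * partialSum f k x

/-- The dyadic interval `I_n(x)`. -/
def dyadicI (n : ℕ) (x : G) : Set G := {y | ∀ i < n, y i = x i}

/-- `e_k ∈ G`: the element whose `k`-th coordinate is `1` and all others `0`. -/
def eG (k : ℕ) : G := fun i => if i = k then 1 else 0

/-- The projection onto the first `n` coordinates. -/
def projG (n : ℕ) : G → (Fin n → ZMod 2) := fun x i => x i

/-- The dyadic filtration `ℱ_n`, generated by the dyadic intervals of length `n`. -/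
def dyadicF : Filtration ℕ (inferInstance : MeasurableSpace G) where
  seq n := MeasurableSpace.comap (projG n) inferInstance
  mono' := by
    intro n m hnm
    have h : projG n = (fun (y : Fin m → ZMod 2) (i : Fin n) => y (Fin.castLE hnm i)) ∘ projG m :=
      rfl
    simp only []
    rw [h, ← MeasurableSpace.comap_comp]
    exact MeasurableSpace.comap_mono
      ((measurable_pi_lambda _ fun i => measurable_pi_apply _).comap_le)
  le' := fun n => (measurable_pi_lambda _ fun i => measurable_pi_apply _).comap_le

/-- The Walsh–Fourier coefficients `F̂(k) = lim_n ∫ F_n w_k dμ` of a martingale. -/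
def martCoeff (F : ℕ → G → ℝ) (k : ℕ) : ℝ :=
  limUnder atTop (fun n => ∫ x, F n x * walsh k x ∂μG)

/-- Partial sums `S_m F` of the Walsh–Fourier series of a martingale. -/
def martSum (F : ℕ → G → ℝ) (m : ℕ) (x : G) : ℝ :=
  ∑ k ∈ Finset.range m, martCoeff F k * walsh k x

/-- The `(C,α)` means of a martingale. -/
def martCesaro (α : ℝ) (F : ℕ → G → ℝ) (n : ℕ) (x : G) : ℝ :=
  (cesA α n)⁻¹ * ∑ k ∈ Finset.Icc 1 n, cesA (α - 1) (n - k) * martSum F k x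

/-- The `L_p(G)` quasi-norm `(∫ |f|^p dμ)^{1/p}`, valued in `ℝ≥0∞`. -/
def LpNormG (p : ℝ) (f : G → ℝ) : ℝ≥0∞ :=
  (∫⁻ x, ENNReal.ofReal |f x| ^ p ∂μG) ^ (1 / p)

/-- The Hardy space quasi-norm `‖F‖_{H_p} = ‖sup_n |F_n|‖_p` of a martingale. -/
def hardyNorm (p : ℝ) (F : ℕ → G → ℝ) : ℝ≥0∞ :=
  (∫⁻ x, (⨆ n, ENNReal.ofReal |F n x|) ^ p ∂μG) ^ (1 / p)

/-- The Hardy quasi-norm of an integrable function, via its generated martingale `(E_n f)`. -/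
def hardyFnNorm (p : ℝ) (f : G → ℝ) : ℝ≥0∞ :=
  hardyNorm p (fun n => μG[f | dyadicF n])

/-!
The Fejér kernels at dyadic orders satisfy `2 K_{2^{n+1}} = (1 + r_n) K_{2^n} + D_{2^n}` with
`D_{2^n} = ∏_{i<n} (1 + r_i)`. On `I_{l+1}(e_k + e_l)` the Rademacher functions `r_0, …, r_l` are
`1` except `r_k = r_l = -1`, so `K_{2^n} = (2^n + 1)/2` for `n ≤ k`; the factor `1 + r_k = 0` kills
both `D_{2^n}` for `n > k` and the previous kernel, leaving `K_{2^{k+1}} = D_{2^k}/2 = 2^{k-1}`;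
this value is propagated up to `n = l`, and the factor `1 + r_l = 0` makes all later kernels vanish.
-/

lemma walsh_eq_prod_range {n N : ℕ} (hn : n ≤ N) (x : G) :
    walsh n x = ∏ i ∈ range N, rad i x ^ (n.testBit i).toNat := by
  refine prod_subset (range_subset_range.2 hn) fun i _ hi => ?_
  have hlt : n < 2 ^ i := (Nat.lt_two_pow_self).trans_le
    (Nat.pow_le_pow_right two_pos (not_lt.1 (mem_range.not.1 hi)))
  simp [Nat.testBit_lt_two_pow hlt]

lemma testBit_two_pow_add_of_ne {n j i : ℕ} (hj : j < 2 ^ n) (hi : i ≠ n) :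
    (2 ^ n + j).testBit i = j.testBit i := by
  rcases hi.lt_or_gt with hi | hi
  · exact Nat.testBit_two_pow_add_gt hi j
  · have hpow : 2 ^ (n + 1) ≤ 2 ^ i := Nat.pow_le_pow_right two_pos hi
    rw [Nat.testBit_lt_two_pow (by omega), Nat.testBit_lt_two_pow (by omega)]

lemma walsh_two_pow_add {n j : ℕ} (hj : j < 2 ^ n) (x : G) :
    walsh (2 ^ n + j) x = rad n x * walsh j x := by
  have hn : n ∈ range (2 ^ n + j) := mem_range.2 (Nat.lt_two_pow_self.trans_le le_self_add)
  have hbit : (2 ^ n + j).testBit n = true := by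
    rw [Nat.testBit_two_pow_add_eq, Nat.testBit_lt_two_pow hj, Bool.not_false]
  rw [walsh, walsh_eq_prod_range (le_add_self : j ≤ 2 ^ n + j), ← mul_prod_erase _ _ hn,
    ← mul_prod_erase _ _ hn, hbit, Nat.testBit_lt_two_pow hj]
  simp only [Bool.toNat_true, Bool.toNat_false, pow_one, pow_zero, one_mul]
  exact congrArg _ (prod_congr rfl fun i hi => by
    rw [testBit_two_pow_add_of_ne hj (ne_of_mem_erase hi)])

lemma dirichlet_two_pow_add {n m : ℕ} (hm : m ≤ 2 ^ n) (x : G) :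
    dirichlet (2 ^ n + m) x = dirichlet (2 ^ n) x + rad n x * dirichlet m x := by
  rw [dirichlet, dirichlet, dirichlet, sum_range_add, mul_sum]
  exact congrArg _ (sum_congr rfl fun j hj =>
    walsh_two_pow_add ((mem_range.1 hj).trans_le hm) x)

lemma dirichlet_two_pow (n : ℕ) (x : G) :
    dirichlet (2 ^ n) x = ∏ i ∈ range n, (1 + rad i x) := by
  induction n with
  | zero => simp [dirichlet, walsh]
  | succ n ih =>
    rw [pow_succ, mul_two, dirichlet_two_pow_add le_rfl, ih, prod_range_succ]
    ring

lemma sum_dirichlet_Icc_two_pow_succ (n : ℕ) (x : G) :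
    ∑ j ∈ Icc 1 (2 ^ (n + 1)), dirichlet j x
      = (1 + rad n x) * ∑ j ∈ Icc 1 (2 ^ n), dirichlet j x + 2 ^ n * dirichlet (2 ^ n) x := by
  have hshift (m : ℕ) : ∑ j ∈ Icc 1 m, dirichlet j x = ∑ j ∈ range m, dirichlet (j + 1) x := by
    rw [range_eq_Ico, sum_Ico_add' (fun j => dirichlet j x), zero_add, Ico_add_one_right_eq_Icc]
  have hupper : ∀ j ∈ range (2 ^ n), dirichlet (2 ^ n + j + 1) x
      = dirichlet (2 ^ n) x + rad n x * dirichlet (j + 1) x := fun j hj => by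
    rw [add_assoc, dirichlet_two_pow_add (mem_range.1 hj)]
  rw [hshift, hshift, pow_succ, mul_two, sum_range_add, sum_congr rfl hupper, sum_add_distrib,
    ← mul_sum, sum_const, card_range, nsmul_eq_mul]
  push_cast
  ring

lemma fejer_two_pow_succ (n : ℕ) (x : G) :
    fejer (2 ^ (n + 1)) x = ((1 + rad n x) * fejer (2 ^ n) x + dirichlet (2 ^ n) x) / 2 := by
  rw [fejer, fejer, sum_dirichlet_Icc_two_pow_succ]
  push_cast
  field_simp
  ring

lemma fejer_two_pow_of_forall_rad_eq_one {n : ℕ} {x : G} (hx : ∀ i < n, rad i x = 1) :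
    fejer (2 ^ n) x = (2 ^ n + 1) / 2 := by
  induction n with
  | zero => simp [fejer, dirichlet, walsh]
  | succ n ih =>
    have hD : dirichlet (2 ^ n) x = 2 ^ n := by
      rw [dirichlet_two_pow, prod_congr rfl fun i hi => by rw [hx i (by simp at hi; omega)]]
      norm_num
    rw [fejer_two_pow_succ, ih fun i hi => hx i (by omega), hx n (by omega), hD]
    ring

lemma dirichlet_two_pow_eq_zero {k n : ℕ} {x : G} (hk : rad k x = -1) (hkn : k < n) :
    dirichlet (2 ^ n) x = 0 :=
  (dirichlet_two_pow n x).trans (prod_eq_zero (mem_range.2 hkn) (by rw [hk]; norm_num))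

lemma fejer_two_pow_of_rad_eq_neg_one {k n : ℕ} {x : G} (hbelow : ∀ i < k, rad i x = 1)
    (hk : rad k x = -1) (hkn : k < n) :
    fejer (2 ^ n) x = 2 ^ k / 2 * ∏ i ∈ Ico (k + 1) n, (1 + rad i x) / 2 := by
  induction n, hkn using Nat.le_induction with
  | base =>
    rw [fejer_two_pow_succ, hk, dirichlet_two_pow, prod_congr rfl fun i hi => by
      rw [hbelow i (mem_range.1 hi)]]
    simp only [Ico_self, prod_empty]
    norm_num
  | succ n hkn ih =>
    rw [fejer_two_pow_succ, ih, dirichlet_two_pow_eq_zero hk hkn, prod_Ico_succ_top hkn]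
    ring

lemma rad_of_mem_dyadicI {n i : ℕ} {x y : G} (hx : x ∈ dyadicI n y) (hi : i < n) :
    rad i x = rad i y := by
  rw [rad, rad, hx i hi]

lemma rad_eG_add_eG {k l : ℕ} (hkl : k ≠ l) (i : ℕ) :
    rad i (eG k + eG l) = if i = k ∨ i = l then -1 else 1 := by
  rcases eq_or_ne i k with rfl | hik
  · simp [rad, eG, hkl, ZMod.val_one]
  rcases eq_or_ne i l with rfl | hil
  · simp [rad, eG, hik, ZMod.val_one]
  · simp [rad, eG, hik, hil]

/-- for `x ∈ I_{l+1}(e_k + e_l)` with `k < l`: `|K_{2^A}(x)| ≤ c 2^k` when `A ≤ l`,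
and `K_{2^A}(x) = 0` when `A > l`. -/
theorem statement7 :
    ∃ c : ℝ, 0 < c ∧ ∀ k l : ℕ, k < l → ∀ x ∈ dyadicI (l + 1) (eG k + eG l),
      (∀ A : ℕ, A ≤ l → |fejer (2 ^ A) x| ≤ c * 2 ^ k) ∧
      (∀ A : ℕ, l < A → fejer (2 ^ A) x = 0) := by
  refine ⟨1, one_pos, fun k l hkl x hx => ?_⟩
  have hrad (i : ℕ) (hi : i ≤ l) : rad i x = if i = k ∨ i = l then -1 else 1 := by
    rw [rad_of_mem_dyadicI hx (Nat.lt_succ_of_le hi), rad_eG_add_eG hkl.ne]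
  have hbelow : ∀ i < k, rad i x = 1 := fun i hi => by rw [hrad i (by omega), if_neg (by omega)]
  have hk : rad k x = -1 := by rw [hrad k hkl.le, if_pos (Or.inl rfl)]
  refine ⟨fun A hA => ?_, fun A hA => ?_⟩
  · rcases le_or_gt A k with hAk | hkA
    · rw [fejer_two_pow_of_forall_rad_eq_one fun i hi => hbelow i (by omega), one_mul,
        abs_of_pos (by positivity)]
      have hpow : (2 : ℝ) ^ A ≤ 2 ^ k := pow_le_pow_right₀ one_le_two hAk
      linarith [one_le_pow₀ (M₀ := ℝ) (n := A) one_le_two]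
    · have hone : ∀ i ∈ Ico (k + 1) A, (1 + rad i x) / 2 = 1 := fun i hi => by
        rw [mem_Ico] at hi
        rw [hrad i (by omega), if_neg (by omega)]
        norm_num
      rw [fejer_two_pow_of_rad_eq_neg_one hbelow hk hkA, prod_eq_one hone, mul_one, one_mul,
        abs_of_pos (by positivity)]
      linarith [pow_pos (two_pos (α := ℝ)) k]
  · have hl : (1 + rad l x) / 2 = 0 := by
      rw [hrad l le_rfl, if_pos (Or.inr rfl)]
      norm_num
    rw [fejer_two_pow_of_rad_eq_neg_one hbelow hk (hkl.trans hA),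
      prod_eq_zero (mem_Ico.2 ⟨hkl, hA⟩) hl, mul_zero]

end
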